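/- Let F be a field and let I be the ideal of F[X,Y] generated by Y^{22}, X^4Y^{18}, X^7Y^{15}, X^8Y^{14}, X^{11}Y^{11}, X^{14}Y^8, X^{15}Y^7, X^{18}Y^4, X^{22}. Then I is Ratliff-Rush closed, i.e. ⋃_{k≥0} (I^{k+1} : I^k) = I, but I^2 is not Ratliff-Rush closed: indeed X^{20}Y^{24}·I ⊆ I^3 and X^{20}Y^{24} ∉ I^2, so X^{20}Y^{24} ∈ ~(I^2) \ I^2. -/

import Mathlib

/-!
Here `I = (X⁴, Y⁴)² (X⁷, Y⁷)²`, so the exponents of `Iⁿ` are the pairs `(4i + 7j, 4i' + 7j')`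
with `i + i' = j + j' = 2n`. If `f Iᵏ ⊆ Iᵏ⁺¹`, multiplying by `Y²²ᵏ, X²²ᵏ ∈ Iᵏ` shows that every
exponent `m` of `f` satisfies `a ≤ m₀, 22 ≤ a + m₁` and `b ≤ m₁, 22 ≤ b + m₀` for some `a, b` in the
numerical semigroup `⟨4, 7⟩`; as its only gaps are `1, 2, 3, 5, 6, 9, 10, 13, 17`, this forces
`Xᵐ ∈ I`. On the other hand `(20, 24)` lies above no exponent of `I²`, since `20 = 4 · 5` would
need `i = 5 > 4`, while `X²⁰Y²⁴` times any generator of `I` is a product of three generators.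
-/

/-- The Ratliff-Rush closure of the power `I^n`:  `⋃_{k≥0} (I^{n+k} : I^k)`. -/
noncomputable def rrPow {R : Type*} [CommRing R] (I : Ideal R) (n : ℕ) : Ideal R :=
  ⨆ k : ℕ, (I ^ (n + k)).colon ((I ^ k : Ideal R) : Set R)

open MvPolynomial Pointwise

section RatliffRush

variable {R : Type*} [CommRing R]

theorem mem_rrPow_of_forall_mul_mem {I : Ideal R} {n : ℕ} {f : R} (k : ℕ)
    (h : ∀ g ∈ I ^ k, f * g ∈ I ^ (n + k)) : f ∈ rrPow I n :=
  Ideal.mem_iSup_of_mem k (Submodule.mem_colon.mpr h)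

theorem pow_le_rrPow (I : Ideal R) (n : ℕ) : I ^ n ≤ rrPow I n := fun _ hf =>
  mem_rrPow_of_forall_mul_mem 0 fun g _ => Ideal.mul_mem_right g _ hf

end RatliffRush

namespace MvPolynomial

variable {σ : Type*} (K : Type*) [CommSemiring K]

noncomputable def monomialIdeal (S : Set (σ →₀ ℕ)) : Ideal (MvPolynomial σ K) :=
  Ideal.span ((fun s => monomial s 1) '' S)

variable {K}

theorem mem_monomialIdeal {S : Set (σ →₀ ℕ)} {f : MvPolynomial σ K} :
    f ∈ monomialIdeal K S ↔ ∀ m ∈ f.support, ∃ s ∈ S, s ≤ m :=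
  mem_ideal_span_monomial_image

theorem monomial_mem_monomialIdeal {S : Set (σ →₀ ℕ)} {s : σ →₀ ℕ} (hs : s ∈ S) :
    monomial s 1 ∈ monomialIdeal K S :=
  Ideal.subset_span ⟨s, hs, rfl⟩

theorem exists_le_add_of_mul_monomial_mem {S : Set (σ →₀ ℕ)} {f : MvPolynomial σ K}
    {e m : σ →₀ ℕ} (h : f * monomial e 1 ∈ monomialIdeal K S) (hm : m ∈ f.support) :
    ∃ s ∈ S, s ≤ m + e :=
  mem_monomialIdeal.mp h _ <| by
    rw [mem_support_iff, coeff_mul_monomial, mul_one]; exact mem_support_iff.mp hm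

theorem monomialIdeal_mul (S T : Set (σ →₀ ℕ)) :
    monomialIdeal K S * monomialIdeal K T = monomialIdeal K (S + T) := by
  rw [monomialIdeal, monomialIdeal, monomialIdeal, Ideal.span_mul_span', ← Set.image2_mul,
    ← Set.image2_add, Set.image_image2, Set.image2_image_left, Set.image2_image_right]
  simp only [monomial_mul, mul_one]

theorem monomialIdeal_pow (S : Set (σ →₀ ℕ)) (n : ℕ) :
    monomialIdeal K S ^ n = monomialIdeal K (n • S) := by
  induction n with
  | zero => simp [monomialIdeal, Ideal.one_eq_top]
  | succ n ih => rw [pow_succ, ih, monomialIdeal_mul, succ_nsmul]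

end MvPolynomial

namespace RatliffRushExample

noncomputable def expPair (a b : ℕ) : Fin 2 →₀ ℕ := Finsupp.single 0 a + Finsupp.single 1 b

@[simp] theorem expPair_apply_zero (a b : ℕ) : expPair a b 0 = a := by simp [expPair]

@[simp] theorem expPair_apply_one (a b : ℕ) : expPair a b 1 = b := by simp [expPair]

theorem X_pow_mul_X_pow {F : Type*} [CommSemiring F] (a b : ℕ) :
    (X 0 ^ a * X 1 ^ b : MvPolynomial (Fin 2) F) = monomial (expPair a b) 1 := by
  rw [X_pow_eq_monomial, X_pow_eq_monomial, monomial_mul, mul_one, expPair]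

def gens : Set (Fin 2 →₀ ℕ) :=
  {expPair 0 22, expPair 4 18, expPair 7 15, expPair 8 14, expPair 11 11, expPair 14 8,
    expPair 15 7, expPair 18 4, expPair 22 0}

theorem span_eq_monomialIdeal_gens (F : Type*) [CommSemiring F] :
    Ideal.span {X 1 ^ 22, X 0 ^ 4 * X 1 ^ 18, X 0 ^ 7 * X 1 ^ 15, X 0 ^ 8 * X 1 ^ 14,
      X 0 ^ 11 * X 1 ^ 11, X 0 ^ 14 * X 1 ^ 8, X 0 ^ 15 * X 1 ^ 7, X 0 ^ 18 * X 1 ^ 4, X 0 ^ 22} =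
      monomialIdeal F gens := by
  rw [monomialIdeal, gens]
  simp only [Set.image_insert_eq, Set.image_singleton, ← X_pow_mul_X_pow, pow_zero, one_mul,
    mul_one]

theorem exists_of_mem_gens {g : Fin 2 →₀ ℕ} (hg : g ∈ gens) :
    ∃ i j i' j', i + i' = 2 ∧ j + j' = 2 ∧ g 0 = 4 * i + 7 * j ∧ g 1 = 4 * i' + 7 * j' := by
  rcases hg with rfl | rfl | rfl | rfl | rfl | rfl | rfl | rfl | rfl
  exacts [⟨0, 0, 2, 2, by simp⟩, ⟨1, 0, 1, 2, by simp⟩, ⟨0, 1, 2, 1, by simp⟩,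
    ⟨2, 0, 0, 2, by simp⟩, ⟨1, 1, 1, 1, by simp⟩, ⟨0, 2, 2, 0, by simp⟩, ⟨2, 1, 0, 1, by simp⟩,
    ⟨1, 2, 1, 0, by simp⟩, ⟨2, 2, 0, 0, by simp⟩]

theorem exists_of_mem_nsmul_gens {n : ℕ} {t : Fin 2 →₀ ℕ} (ht : t ∈ n • gens) :
    ∃ i j i' j', i + i' = 2 * n ∧ j + j' = 2 * n ∧
      t 0 = 4 * i + 7 * j ∧ t 1 = 4 * i' + 7 * j' := by
  induction n generalizing t with
  | zero =>
    obtain rfl : t = 0 := by simpa using ht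
    exact ⟨0, 0, 0, 0, by simp⟩
  | succ n ih =>
    rw [succ_nsmul] at ht
    obtain ⟨u, hu, g, hg, rfl⟩ := Set.mem_add.mp ht
    obtain ⟨i, j, i', j', hi, hj, hu0, hu1⟩ := ih hu
    obtain ⟨p, q, p', q', hp, hq, hg0, hg1⟩ := exists_of_mem_gens hg
    exact ⟨i + p, j + q, i' + p', j' + q', by omega, by omega,
      by simp only [Finsupp.add_apply, hu0, hg0]; ring,
      by simp only [Finsupp.add_apply, hu1, hg1]; ring⟩

theorem four_mul_add_seven_mul_notMem (i j : ℕ) :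
    4 * i + 7 * j ∉ ({1, 2, 3, 5, 6, 9, 10, 13, 17} : Finset ℕ) := by
  intro h
  simp only [Finset.mem_insert, Finset.mem_singleton] at h
  have hi : i ≤ 4 := by omega
  have hj : j ≤ 2 := by omega
  interval_cases i <;> interval_cases j <;> omega

theorem exists_mem_gens_le {m : Fin 2 →₀ ℕ} {a b : ℕ}
    (ha : a ∉ ({1, 2, 3, 5, 6, 9, 10, 13, 17} : Finset ℕ))
    (hb : b ∉ ({1, 2, 3, 5, 6, 9, 10, 13, 17} : Finset ℕ))
    (h₀ : a ≤ m 0) (h₁ : 22 ≤ a + m 1) (h₁' : b ≤ m 1) (h₀' : 22 ≤ b + m 0) :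
    ∃ g ∈ gens, g ≤ m := by
  simp only [Finset.mem_insert, Finset.mem_singleton, not_or] at ha hb
  have key : 22 ≤ m 1 ∨ (4 ≤ m 0 ∧ 18 ≤ m 1) ∨ (7 ≤ m 0 ∧ 15 ≤ m 1) ∨
      (8 ≤ m 0 ∧ 14 ≤ m 1) ∨ (11 ≤ m 0 ∧ 11 ≤ m 1) ∨ (14 ≤ m 0 ∧ 8 ≤ m 1) ∨
      (15 ≤ m 0 ∧ 7 ≤ m 1) ∨ (18 ≤ m 0 ∧ 4 ≤ m 1) ∨ 22 ≤ m 0 := by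
    omega
  simp only [gens, Set.mem_insert_iff, Set.mem_singleton_iff, exists_eq_or_imp, exists_eq_left,
    Finsupp.le_def, Fin.forall_fin_two, expPair_apply_zero, expPair_apply_one, zero_le, true_and,
    and_true]
  exact key

theorem colon_pow_le {F : Type*} [CommRing F] (k : ℕ) :
    (monomialIdeal F gens ^ (1 + k)).colon
      ((monomialIdeal F gens ^ k : Ideal (MvPolynomial (Fin 2) F)) : Set (MvPolynomial (Fin 2) F))
      ≤ monomialIdeal F gens := by
  intro f hf
  have pow_mem (a b : ℕ) (hab : expPair a b ∈ gens) :
      f * monomial (expPair (k * a) (k * b)) 1 ∈ monomialIdeal F ((1 + k) • gens) := by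
    rw [← monomialIdeal_pow]
    refine Submodule.mem_colon.mp hf _ ?_
    rw [← X_pow_mul_X_pow (F := F), pow_mul', pow_mul', ← mul_pow, X_pow_mul_X_pow (F := F)]
    exact Ideal.pow_mem_pow (monomial_mem_monomialIdeal hab) k
  refine mem_monomialIdeal.mpr fun m hm => ?_
  obtain ⟨t, ht, htm⟩ := exists_le_add_of_mul_monomial_mem (pow_mem 0 22 (by simp [gens])) hm
  obtain ⟨t', ht', htm'⟩ := exists_le_add_of_mul_monomial_mem (pow_mem 22 0 (by simp [gens])) hm
  obtain ⟨i, j, i', j', hi, hj, ht0, ht1⟩ := exists_of_mem_nsmul_gens ht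
  obtain ⟨p', q', p, q, hp, hq, ht0', ht1'⟩ := exists_of_mem_nsmul_gens ht'
  have h₀ := htm 0
  have h₁ := htm 1
  have h₀' := htm' 0
  have h₁' := htm' 1
  simp only [Finsupp.add_apply, expPair_apply_zero, expPair_apply_one] at h₀ h₁ h₀' h₁'
  exact exists_mem_gens_le (four_mul_add_seven_mul_notMem i j)
    (four_mul_add_seven_mul_notMem p q) (by omega) (by omega) (by omega) (by omega)

theorem monomial_notMem_sq {F : Type*} [CommSemiring F] [Nontrivial F] :
    monomial (expPair 20 24) 1 ∉ monomialIdeal F gens ^ 2 := by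
  rw [monomialIdeal_pow, mem_monomialIdeal]
  intro h
  obtain ⟨t, ht, hle⟩ := h (expPair 20 24) (by simp [mem_support_iff, coeff_monomial])
  obtain ⟨i, j, i', j', hi, hj, ht0, ht1⟩ := exists_of_mem_nsmul_gens ht
  have h₀ := hle 0
  have h₁ := hle 1
  simp only [expPair_apply_zero, expPair_apply_one] at h₀ h₁
  have hj' : j' ≤ 4 := by omega
  interval_cases j' <;> omega

theorem mul_mem_span_pow_three {R : Type*} [CommRing R] (x y : R) {f : R}
    (hf : f ∈ Ideal.span {y ^ 22, x ^ 4 * y ^ 18, x ^ 7 * y ^ 15, x ^ 8 * y ^ 14,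
      x ^ 11 * y ^ 11, x ^ 14 * y ^ 8, x ^ 15 * y ^ 7, x ^ 18 * y ^ 4, x ^ 22}) :
    x ^ 20 * y ^ 24 * f ∈ Ideal.span {y ^ 22, x ^ 4 * y ^ 18, x ^ 7 * y ^ 15, x ^ 8 * y ^ 14,
      x ^ 11 * y ^ 11, x ^ 14 * y ^ 8, x ^ 15 * y ^ 7, x ^ 18 * y ^ 4, x ^ 22} ^ 3 := by
  set S : Set R := {y ^ 22, x ^ 4 * y ^ 18, x ^ 7 * y ^ 15, x ^ 8 * y ^ 14,
      x ^ 11 * y ^ 11, x ^ 14 * y ^ 8, x ^ 15 * y ^ 7, x ^ 18 * y ^ 4, x ^ 22}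
  have cube {g : R} (a b c : R) (habc : g * (x ^ 20 * y ^ 24) = a * b * c)
      (hS : a ∈ S ∧ b ∈ S ∧ c ∈ S := by
        simp only [S, Set.mem_insert_iff, Set.mem_singleton_iff, true_or, or_true, and_self]) :
      g * (x ^ 20 * y ^ 24) ∈ Ideal.span S ^ 3 := by
    rw [habc, pow_three']
    exact Ideal.mul_mem_mul (Ideal.mul_mem_mul (Ideal.subset_span hS.1) (Ideal.subset_span hS.2.1))
      (Ideal.subset_span hS.2.2)
  suffices Ideal.span S ≤ (Ideal.span S ^ 3).colon (Ideal.span {x ^ 20 * y ^ 24}) by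
    rw [mul_comm]
    exact Ideal.mem_colon_span_singleton.mp (this hf)
  refine Ideal.span_le.mpr fun g hg => Ideal.mem_colon_span_singleton.mpr ?_
  rcases hg with rfl | rfl | rfl | rfl | rfl | rfl | rfl | rfl | rfl
  · exact cube (x ^ 4 * y ^ 18) (x ^ 8 * y ^ 14) (x ^ 8 * y ^ 14) (by ring)
  · exact cube (x ^ 8 * y ^ 14) (x ^ 8 * y ^ 14) (x ^ 8 * y ^ 14) (by ring)
  · exact cube (x ^ 11 * y ^ 11) (x ^ 8 * y ^ 14) (x ^ 8 * y ^ 14) (by ring)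
  · exact cube (x ^ 14 * y ^ 8) (x ^ 7 * y ^ 15) (x ^ 7 * y ^ 15) (by ring)
  · exact cube (x ^ 15 * y ^ 7) (x ^ 8 * y ^ 14) (x ^ 8 * y ^ 14) (by ring)
  · exact cube (x ^ 18 * y ^ 4) (x ^ 8 * y ^ 14) (x ^ 8 * y ^ 14) (by ring)
  · exact cube (x ^ 14 * y ^ 8) (x ^ 14 * y ^ 8) (x ^ 7 * y ^ 15) (by ring)
  · exact cube (x ^ 22) (x ^ 8 * y ^ 14) (x ^ 8 * y ^ 14) (by ring)
  · exact cube (x ^ 14 * y ^ 8) (x ^ 14 * y ^ 8) (x ^ 14 * y ^ 8) (by ring)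

end RatliffRushExample

open RatliffRushExample in
/-- The ideal `I = (Y^22, X^4Y^18, X^7Y^15, X^8Y^14, X^11Y^11, X^14Y^8, X^15Y^7,
X^18Y^4, X^22)` of `F[X,Y]` is Ratliff-Rush closed, but `I^2` is not:
`X^20Y^24·I ⊆ I^3` and `X^20Y^24 ∉ I^2`, so `X^20Y^24 ∈ ~(I^2) \ I^2`. -/
theorem stmt_10 (F : Type*) [Field F]
    (X Y : MvPolynomial (Fin 2) F)
    (hX : X = MvPolynomial.X 0) (hY : Y = MvPolynomial.X 1)
    (I : Ideal (MvPolynomial (Fin 2) F))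
    (hI : I = Ideal.span {Y ^ 22, X ^ 4 * Y ^ 18, X ^ 7 * Y ^ 15, X ^ 8 * Y ^ 14,
      X ^ 11 * Y ^ 11, X ^ 14 * Y ^ 8, X ^ 15 * Y ^ 7, X ^ 18 * Y ^ 4, X ^ 22}) :
    rrPow I 1 = I ∧
    (∀ f ∈ I, X ^ 20 * Y ^ 24 * f ∈ I ^ 3) ∧
    X ^ 20 * Y ^ 24 ∉ I ^ 2 ∧
    X ^ 20 * Y ^ 24 ∈ rrPow I 2 ∧
    rrPow I 2 ≠ I ^ 2 := by
  have mul_mem : ∀ f ∈ I, X ^ 20 * Y ^ 24 * f ∈ I ^ 3 := fun f hf => by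
    subst hI
    exact mul_mem_span_pow_three X Y hf
  have notMem : X ^ 20 * Y ^ 24 ∉ I ^ 2 := by
    rw [hI, hX, hY, span_eq_monomialIdeal_gens, X_pow_mul_X_pow]
    exact monomial_notMem_sq
  have mem : X ^ 20 * Y ^ 24 ∈ rrPow I 2 :=
    mem_rrPow_of_forall_mul_mem 1 fun g hg => mul_mem g (pow_one I ▸ hg)
  refine ⟨le_antisymm ?_ ((pow_one I).symm.trans_le (pow_le_rrPow I 1)), mul_mem, notMem, mem,
    fun h => notMem (h ▸ mem)⟩
  rw [hI, hX, hY, span_eq_monomialIdeal_gens]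
  exact iSup_le colon_pow_le
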